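/- For distinct nonzero $\lambda_1, \lambda_2, \alpha_1, \alpha_2 \in \mathbb{C}^*$ and $\beta_1, \beta_2, \gamma_1, \gamma_2, \rho_1, \rho_2 \in \mathbb{C}$: the modules $\Omega(\lambda_1, \alpha_1, \beta_1, \rho_1)$ and $\Omega(\lambda_2, \alpha_2, \beta_2, \rho_2)$ over the affine-Virasoro algebra of type $A_1$ are isomorphic if and only if $(\lambda_1,\alpha_1,\rho_1) = (\lambda_2,\alpha_2,\rho_2)$ and ($\beta_1 = \beta_2$ or $\beta_1 = -\beta_2 - 1$). -/

import Mathlib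

open MvPolynomial

/-- `ℂ[s,t]`, with `s = X 0` and `t = X 1`. -/
noncomputable abbrev P2 : Type := MvPolynomial (Fin 2) ℂ

/-- Substitution `g(s,t) ↦ g(s - i, t + a)`. -/
noncomputable def subST (i : ℤ) (a : ℂ) : P2 →ₐ[ℂ] P2 :=
  aeval ![X 0 - C (i : ℂ), X 1 + C a]

/-- Action of `e_i` on `Ω(λ,α,β,ρ)`. -/
noncomputable def omE (lam alp : ℂ) (i : ℤ) (g : P2) : P2 :=
  (lam ^ i * alp) • subST i (-2) g

/-- Action of `f_i` on `Ω(λ,α,β,ρ)`. -/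
noncomputable def omF (lam alp bet : ℂ) (i : ℤ) (g : P2) : P2 :=
  (-(lam ^ i / alp)) • ((C (1/2 : ℂ) * X 1 - C bet) * (C (1/2 : ℂ) * X 1 + C bet + 1) *
    subST i 2 g)

/-- Action of `h_i` on `Ω(λ,α,β,ρ)`. -/
noncomputable def omH (lam : ℂ) (i : ℤ) (g : P2) : P2 :=
  lam ^ i • (X 1 * subST i 0 g)

/-- Action of `d_i` on `Ω(λ,α,β,ρ)`. -/
noncomputable def omD (lam rho : ℂ) (i : ℤ) (g : P2) : P2 :=
  lam ^ i • ((X 0 + C ((i : ℂ) * rho)) * subST i 0 g)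

/-!
An isomorphism commutes with `h_0 = t·` and `d_0 = s·`, hence is `ℂ[s,t]`-linear, i.e. multiplication
by the unit `φ 1`, a nonzero constant `c`. Cancelling `c`, the actions of `d_1`, `e_0`, `f_0` on `1`
must agree, which reads off `λ`, `ρ`, `α`, and then `(t/2 - β)(t/2 + β + 1)`; this polynomial
determines `β` up to the symmetry `β ↦ -β - 1`, under which it is invariant.
-/

namespace MvPolynomial

variable {R σ : Type*}

theorem linearMap_mul_of_map_X_mul [CommSemiring R]
    (φ : MvPolynomial σ R →ₗ[R] MvPolynomial σ R) (hX : ∀ n g, φ (X n * g) = X n * φ g)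
    (p g : MvPolynomial σ R) : φ (p * g) = p * φ g := by
  induction p using MvPolynomial.induction_on generalizing g with
  | C a => rw [C_mul', map_smul, C_mul']
  | add p q hp hq => rw [add_mul, map_add, hp, hq, add_mul]
  | mul_X p n hp => rw [mul_assoc, hp, hX, mul_assoc]

theorem exists_isUnit_eq_smul_of_map_X_mul [CommRing R] [IsReduced R]
    (φ : MvPolynomial σ R ≃ₗ[R] MvPolynomial σ R) (hX : ∀ n g, φ (X n * g) = X n * φ g) :
    ∃ r : R, IsUnit r ∧ ∀ g, φ g = r • g := by
  have hmul := linearMap_mul_of_map_X_mul φ.toLinearMap hX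
  have hφ : ∀ g, φ g = g * φ 1 := fun g => by simpa using hmul g 1
  obtain ⟨g₀, hg₀⟩ := φ.surjective 1
  have hunit : IsUnit (φ 1) := IsUnit.of_mul_eq_one_right g₀ (by rw [← hφ, hg₀])
  obtain ⟨r, hr, hr1⟩ := isUnit_iff_eq_C_of_isReduced.mp hunit
  exact ⟨r, hr, fun g => by rw [hφ, hr1, smul_eq_C_mul, mul_comm]⟩

theorem eq_and_eq_of_C_mul_X_add_C_eq [CommSemiring R] [Nontrivial R] {i : σ} {a b a' b' : R}
    (h : C a * X i + C b = C a' * X i + C b') : a = a' ∧ b = b' := by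
  classical
  have hcoeff := fun m => congrArg (coeff m) h
  refine ⟨?_, by simpa using hcoeff 0⟩
  simpa [coeff_C, eq_comm (a := (0 : σ →₀ ℕ))] using hcoeff (Finsupp.single i 1)

end MvPolynomial

lemma subST_zero_zero : subST 0 0 = AlgHom.id ℂ P2 := by
  refine MvPolynomial.algHom_ext fun n => ?_
  fin_cases n <;> simp [subST]

lemma omH_zero (lam : ℂ) (g : P2) : omH lam 0 g = X 1 * g := by
  simp [omH, subST_zero_zero]

lemma omD_zero (lam rho : ℂ) (g : P2) : omD lam rho 0 g = X 0 * g := by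
  simp [omD, subST_zero_zero]

lemma omE_smul (lam alp c : ℂ) (i : ℤ) (g : P2) : omE lam alp i (c • g) = c • omE lam alp i g := by
  simp only [omE, map_smul, smul_comm c]

lemma omF_smul (lam alp bet c : ℂ) (i : ℤ) (g : P2) :
    omF lam alp bet i (c • g) = c • omF lam alp bet i g := by
  simp only [omF, map_smul, mul_smul_comm, smul_comm c]

lemma omD_smul (lam rho c : ℂ) (i : ℤ) (g : P2) :
    omD lam rho i (c • g) = c • omD lam rho i g := by
  simp only [omD, map_smul, mul_smul_comm, smul_comm c]

noncomputable def omFFactor (bet : ℂ) : P2 :=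
  (C (1/2 : ℂ) * X 1 - C bet) * (C (1/2 : ℂ) * X 1 + C bet + 1)

lemma omF_eq (lam alp bet : ℂ) (i : ℤ) (g : P2) :
    omF lam alp bet i g = (-(lam ^ i / alp)) • (omFFactor bet * subST i 2 g) := rfl

lemma omFFactor_eq_iff (b₁ b₂ : ℂ) : omFFactor b₁ = omFFactor b₂ ↔ b₁ = b₂ ∨ b₁ = -b₂ - 1 := by
  constructor
  · intro h
    have h2 := congrArg (eval fun _ => 2 * b₂) h
    simp only [omFFactor, eval_mul, eval_add, eval_sub, eval_C, eval_X, map_one] at h2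
    have hkey : (b₁ - b₂) * (b₁ + b₂ + 1) = 0 := by linear_combination -h2
    rcases mul_eq_zero.mp hkey with h | h
    · exact .inl (by linear_combination h)
    · exact .inr (by linear_combination h)
  · rintro (rfl | rfl)
    · rfl
    · simp only [omFFactor, map_sub, map_neg, map_one]
      ring

lemma omE_zero_one (lam alp : ℂ) : omE lam alp 0 1 = C alp := by
  simp [omE, smul_eq_C_mul]

lemma omF_zero_one (lam alp bet : ℂ) : omF lam alp bet 0 1 = (-(1 / alp)) • omFFactor bet := by
  simp [omF_eq]

lemma omD_one_one (lam rho : ℂ) : omD lam rho 1 1 = C lam * X 0 + C (lam * rho) := by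
  simp only [omD, zpow_one, Int.cast_one, one_mul, map_one, mul_one, smul_eq_C_mul, map_mul]
  ring

theorem stmt18_general (lam1 lam2 alp1 alp2 : ℂ)
    (hl1 : lam1 ≠ 0) (ha1 : alp1 ≠ 0)
    (bet1 bet2 rho1 rho2 : ℂ) :
    (∃ φ : P2 ≃ₗ[ℂ] P2, ∀ (i : ℤ) (g : P2),
        φ (omE lam1 alp1 i g) = omE lam2 alp2 i (φ g) ∧
        φ (omF lam1 alp1 bet1 i g) = omF lam2 alp2 bet2 i (φ g) ∧
        φ (omH lam1 i g) = omH lam2 i (φ g) ∧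
        φ (omD lam1 rho1 i g) = omD lam2 rho2 i (φ g)) ↔
      (lam1 = lam2 ∧ alp1 = alp2 ∧ rho1 = rho2 ∧ (bet1 = bet2 ∨ bet1 = -bet2 - 1)) := by
  constructor
  · rintro ⟨φ, hφ⟩
    have hX : ∀ n g, φ (X n * g) = X n * φ g := by
      intro n g
      fin_cases n
      · simpa [omD_zero] using (hφ 0 g).2.2.2
      · simpa [omH_zero] using (hφ 0 g).2.2.1
    obtain ⟨c, hc, hφc⟩ := exists_isUnit_eq_smul_of_map_X_mul φ hX
    have hE := hc.smul_left_cancel.mp (by simpa only [hφc, omE_smul] using (hφ 0 1).1)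
    have hF := hc.smul_left_cancel.mp (by simpa only [hφc, omF_smul] using (hφ 0 1).2.1)
    have hD := hc.smul_left_cancel.mp (by simpa only [hφc, omD_smul] using (hφ 1 1).2.2.2)
    rw [omD_one_one, omD_one_one] at hD
    obtain ⟨rfl, hlr⟩ := eq_and_eq_of_C_mul_X_add_C_eq hD
    obtain rfl : alp1 = alp2 := C_injective _ _ (by simpa only [omE_zero_one] using hE)
    rw [omF_zero_one, omF_zero_one] at hF
    refine ⟨rfl, rfl, mul_left_cancel₀ hl1 hlr, (omFFactor_eq_iff _ _).mp ?_⟩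
    exact smul_right_injective P2 (neg_ne_zero.mpr (one_div_ne_zero ha1)) hF
  · rintro ⟨rfl, rfl, rfl, hbet⟩
    refine ⟨LinearEquiv.refl ℂ P2, fun i g => ⟨rfl, ?_, rfl, rfl⟩⟩
    simp only [LinearEquiv.refl_apply, omF_eq, (omFFactor_eq_iff _ _).mpr hbet]

/-- `Ω(λ₁,α₁,β₁,ρ₁) ≅ Ω(λ₂,α₂,β₂,ρ₂)` as modules over the affine-Virasoro algebra of type
`A₁` if and only if `(λ₁,α₁,ρ₁) = (λ₂,α₂,ρ₂)` and (`β₁ = β₂` or `β₁ = -β₂ - 1`). -/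
theorem stmt18 (lam1 lam2 alp1 alp2 : ℂ)
    (hl1 : lam1 ≠ 0) (hl2 : lam2 ≠ 0) (ha1 : alp1 ≠ 0) (ha2 : alp2 ≠ 0)
    (bet1 bet2 rho1 rho2 : ℂ) :
    (∃ φ : P2 ≃ₗ[ℂ] P2, ∀ (i : ℤ) (g : P2),
        φ (omE lam1 alp1 i g) = omE lam2 alp2 i (φ g) ∧
        φ (omF lam1 alp1 bet1 i g) = omF lam2 alp2 bet2 i (φ g) ∧
        φ (omH lam1 i g) = omH lam2 i (φ g) ∧
        φ (omD lam1 rho1 i g) = omD lam2 rho2 i (φ g)) ↔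
      (lam1 = lam2 ∧ alp1 = alp2 ∧ rho1 = rho2 ∧ (bet1 = bet2 ∨ bet1 = -bet2 - 1)) :=
  stmt18_general lam1 lam2 alp1 alp2 hl1 ha1 bet1 bet2 rho1 rho2
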